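/- Let c : (-π/2,π/2) → S² be a smooth arc-length parametrized curve, a₀₂ > 0, a₁₁ ∈ ℝ, and define ξ, B as above, γ(v) = (a₀₂/(1+a₁₁²))∫₀ᵛ t·B(t) dt, and f_c(u,v) = γ(v) + u·ξ(v). Then f_c has the same first fundamental form as the degenerate quadratic cross cap f₀(u,v) = (u, uv, a₁₁uv + (a₀₂/2)v²); i.e., ∂f_c/∂u · ∂f_c/∂u = 1+(1+a₁₁²)v², ∂f_c/∂u · ∂f_c/∂v = (1+a₁₁²)uv + a₀₂a₁₁v², and ∂f_c/∂v · ∂f_c/∂v = (1+a₁₁²)u² + 2a₀₂a₁₁uv + a₀₂²v². -/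

import Mathlib

noncomputable section
open Real Filter

/-- Euclidean dot product on ℝ³ (as ℝ × ℝ × ℝ). -/
def dot3 (a b : ℝ × ℝ × ℝ) : ℝ := a.1 * b.1 + a.2.1 * b.2.1 + a.2.2 * b.2.2

/-- Cross product on ℝ³. -/
def cross3 (a b : ℝ × ℝ × ℝ) : ℝ × ℝ × ℝ :=
  (a.2.1 * b.2.2 - a.2.2 * b.2.1, a.2.2 * b.1 - a.1 * b.2.2, a.1 * b.2.1 - a.2.1 * b.1)

/-- Determinant of three column vectors in ℝ³. -/
def det3 (a b c : ℝ × ℝ × ℝ) : ℝ := dot3 (cross3 a b) c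

/-- Euclidean norm on ℝ³. -/
def norm3 (a : ℝ × ℝ × ℝ) : ℝ := Real.sqrt (dot3 a a)

/-- Partial derivative in the first variable. -/
def p1 {E : Type*} [NormedAddCommGroup E] [NormedSpace ℝ E] (f : ℝ → ℝ → E) (u v : ℝ) : E :=
  deriv (fun t => f t v) u

/-- Partial derivative in the second variable. -/
def p2 {E : Type*} [NormedAddCommGroup E] [NormedSpace ℝ E] (f : ℝ → ℝ → E) (u v : ℝ) : E :=
  deriv (fun t => f u t) v

lemma dot3_add_left (x y z : ℝ × ℝ × ℝ) : dot3 (x + y) z = dot3 x z + dot3 y z := by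
  obtain ⟨x1,x2,x3⟩ := x; obtain ⟨y1,y2,y3⟩ := y; obtain ⟨z1,z2,z3⟩ := z
  simp [dot3]; ring

lemma dot3_add_right (x y z : ℝ × ℝ × ℝ) : dot3 x (y + z) = dot3 x y + dot3 x z := by
  obtain ⟨x1,x2,x3⟩ := x; obtain ⟨y1,y2,y3⟩ := y; obtain ⟨z1,z2,z3⟩ := z
  simp [dot3]; ring

lemma dot3_smul_left (a : ℝ) (x y : ℝ × ℝ × ℝ) : dot3 (a • x) y = a * dot3 x y := by
  obtain ⟨x1,x2,x3⟩ := x; obtain ⟨y1,y2,y3⟩ := y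
  simp [dot3, Prod.smul_mk, smul_eq_mul]; ring

lemma dot3_smul_right (a : ℝ) (x y : ℝ × ℝ × ℝ) : dot3 x (a • y) = a * dot3 x y := by
  obtain ⟨x1,x2,x3⟩ := x; obtain ⟨y1,y2,y3⟩ := y
  simp [dot3, Prod.smul_mk, smul_eq_mul]; ring

lemma dot3_cross_left (x y : ℝ × ℝ × ℝ) : dot3 x (cross3 x y) = 0 := by
  obtain ⟨x1,x2,x3⟩ := x; obtain ⟨y1,y2,y3⟩ := y
  simp [dot3, cross3]; ring

lemma dot3_cross_right (x y : ℝ × ℝ × ℝ) : dot3 y (cross3 x y) = 0 := by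
  obtain ⟨x1,x2,x3⟩ := x; obtain ⟨y1,y2,y3⟩ := y
  simp [dot3, cross3]; ring

lemma dot3_cross_cross (x y : ℝ × ℝ × ℝ) :
    dot3 (cross3 x y) (cross3 x y) = dot3 x x * dot3 y y - dot3 x y ^ 2 := by
  obtain ⟨x1,x2,x3⟩ := x; obtain ⟨y1,y2,y3⟩ := y
  simp [dot3, cross3]; ring

lemma dot3_comm (x y : ℝ × ℝ × ℝ) : dot3 x y = dot3 y x := by
  obtain ⟨x1,x2,x3⟩ := x; obtain ⟨y1,y2,y3⟩ := y
  simp [dot3]; ring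

lemma hasDerivAt_fst3 {f : ℝ → ℝ × ℝ × ℝ} {f' : ℝ × ℝ × ℝ} {x : ℝ}
    (h : HasDerivAt f f' x) : HasDerivAt (fun t => (f t).1) f'.1 x := by
  simpa using (h.hasFDerivAt.fst).hasDerivAt

lemma hasDerivAt_snd3 {f : ℝ → ℝ × ℝ × ℝ} {f' : ℝ × ℝ × ℝ} {x : ℝ}
    (h : HasDerivAt f f' x) : HasDerivAt (fun t => (f t).2.1) f'.2.1 x := by
  simpa using ((h.hasFDerivAt.snd).hasDerivAt.hasFDerivAt.fst).hasDerivAt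

lemma hasDerivAt_trd3 {f : ℝ → ℝ × ℝ × ℝ} {f' : ℝ × ℝ × ℝ} {x : ℝ}
    (h : HasDerivAt f f' x) : HasDerivAt (fun t => (f t).2.2) f'.2.2 x := by
  simpa using ((h.hasFDerivAt.snd).hasDerivAt.hasFDerivAt.snd).hasDerivAt

lemma HasDerivAt.dot3' {f g : ℝ → ℝ × ℝ × ℝ} {f' g' : ℝ × ℝ × ℝ} {x : ℝ}
    (hf : HasDerivAt f f' x) (hg : HasDerivAt g g' x) :
    HasDerivAt (fun t => dot3 (f t) (g t)) (dot3 f' (g x) + dot3 (f x) g') x := by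
  have h : HasDerivAt (fun t => (f t).1 * (g t).1 + (f t).2.1 * (g t).2.1 + (f t).2.2 * (g t).2.2) _ x := (((hasDerivAt_fst3 hf).mul (hasDerivAt_fst3 hg)).add
      ((hasDerivAt_snd3 hf).mul (hasDerivAt_snd3 hg))).add
      ((hasDerivAt_trd3 hf).mul (hasDerivAt_trd3 hg))
  refine h.congr_deriv ?_
  simp [dot3]; ring

lemma continuous_cross3 {f g : ℝ → ℝ × ℝ × ℝ} (hf : Continuous f) (hg : Continuous g) :
    Continuous fun t => cross3 (f t) (g t) := by
  unfold cross3; fun_prop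


/-- the ruled surface `f_c(u,v) = γ(v) + uξ(v)` has the same
first fundamental form as the degenerate quadratic cross cap `f₀`. -/
theorem stmt_4 (a02 a11 : ℝ) (ha02 : 0 < a02) (c : ℝ → ℝ × ℝ × ℝ)
    (hc : ContDiff ℝ (⊤ : ℕ∞) c)
    (hc1 : ∀ s : ℝ, |s| < π / 2 → dot3 (c s) (c s) = 1)
    (hc2 : ∀ s : ℝ, |s| < π / 2 → dot3 (deriv c s) (deriv c s) = 1) :
    let ξ : ℝ → ℝ × ℝ × ℝ := fun v =>
      Real.sqrt (1 + (1 + a11 ^ 2) * v ^ 2) •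
        c (Real.arctan (v * Real.sqrt (1 + a11 ^ 2)))
    let B : ℝ → ℝ × ℝ × ℝ := fun v => a11 • deriv ξ v + cross3 (ξ v) (deriv ξ v)
    let γ : ℝ → ℝ × ℝ × ℝ := fun v => (a02 / (1 + a11 ^ 2)) • ∫ t in (0:ℝ)..v, t • B t
    let fc : ℝ → ℝ → ℝ × ℝ × ℝ := fun u v => γ v + u • ξ v
    ∀ u v : ℝ,
      dot3 (p1 fc u v) (p1 fc u v) = 1 + (1 + a11 ^ 2) * v ^ 2 ∧
      dot3 (p1 fc u v) (p2 fc u v) = (1 + a11 ^ 2) * u * v + a02 * a11 * v ^ 2 ∧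
      dot3 (p2 fc u v) (p2 fc u v) =
        (1 + a11 ^ 2) * u ^ 2 + 2 * a02 * a11 * u * v + a02 ^ 2 * v ^ 2 := by
  intro ξ B γ fc u v
  have hKpos : (0:ℝ) < 1 + a11 ^ 2 := by positivity
  set k : ℝ := Real.sqrt (1 + a11 ^ 2) with hk
  have hk2 : k ^ 2 = 1 + a11 ^ 2 := Real.sq_sqrt hKpos.le
  set r : ℝ → ℝ := fun t => Real.sqrt (1 + (1 + a11 ^ 2) * t ^ 2) with hrdef
  have hrpos : ∀ t, 0 < r t := fun t => Real.sqrt_pos.mpr (by positivity)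
  have hr2 : ∀ t, r t ^ 2 = 1 + (1 + a11 ^ 2) * t ^ 2 := fun t => Real.sq_sqrt (by positivity)
  set s : ℝ → ℝ := fun t => Real.arctan (t * k) with hsdef
  have hcd : ∀ x, HasDerivAt c (deriv c x) x := fun x =>
    ((hc.differentiable (by simp)) x).hasDerivAt
  have hr' : ∀ t, HasDerivAt r ((1 + a11 ^ 2) * t / r t) t := by
    intro t
    have h1 : HasDerivAt (fun t : ℝ => 1 + (1 + a11 ^ 2) * t ^ 2) ((1 + a11 ^ 2) * (2 * t)) t := by
      simpa using ((hasDerivAt_pow 2 t).const_mul (1 + a11 ^ 2)).const_add 1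
    have h2 := (Real.hasDerivAt_sqrt (x := 1 + (1 + a11 ^ 2) * t ^ 2) (by positivity)).comp t h1
    refine h2.congr_deriv ?_
    have hne := (hrpos t).ne'
    rw [hrdef]
    field_simp
  have hs' : ∀ t, HasDerivAt s (k / r t ^ 2) t := by
    intro t
    have h1 : HasDerivAt (fun t : ℝ => t * k) k t := hasDerivAt_mul_const k
    have h2 := (Real.hasDerivAt_arctan (t * k)).comp t h1
    refine h2.congr_deriv ?_
    have h3 : 1 + (t * k) ^ 2 = r t ^ 2 := by rw [hr2, mul_pow, hk2]; ring
    rw [h3]; ring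
  set Xd : ℝ → ℝ × ℝ × ℝ := fun t =>
    ((1 + a11 ^ 2) * t / r t) • c (s t) + (k / r t) • deriv c (s t) with hXddef
  have hXd : ∀ t, HasDerivAt ξ (Xd t) t := by
    intro t
    have h1 : HasDerivAt (fun t => c (s t)) ((k / r t ^ 2) • deriv c (s t)) t :=
      (hcd (s t)).scomp t (hs' t)
    have h2 := (hr' t).smul h1
    have h3 : ξ = fun t => r t • c (s t) := rfl
    rw [h3]
    have hne := (hrpos t).ne'
    have hco : r t * (k / r t ^ 2) = k / r t := by field_simp
    refine h2.congr_deriv ?_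
    rw [smul_smul, hco]
    simp only [hXddef]
    abel
  have hrc : Continuous r := by rw [hrdef]; fun_prop
  have hsc : Continuous s := by rw [hsdef]; exact Real.continuous_arctan.comp (continuous_id.mul continuous_const)
  have hccont : Continuous c := hc.continuous
  have hcdc : Continuous (deriv c) := hc.continuous_deriv (by simp)
  have hXdc : Continuous Xd := by
    rw [hXddef]
    apply Continuous.add
    · exact (Continuous.div (by fun_prop) hrc fun t => (hrpos t).ne').smul (hccont.comp hsc)
    · exact (Continuous.div continuous_const hrc fun t => (hrpos t).ne').smul (hcdc.comp hsc)
  have hξc : Continuous ξ := by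
    have h3 : ξ = fun t => r t • c (s t) := rfl
    rw [h3]; exact hrc.smul (hccont.comp hsc)
  have hderiv : ∀ t, deriv ξ t = Xd t := fun t => (hXd t).deriv
  have hBeq : ∀ t, B t = a11 • Xd t + cross3 (ξ t) (Xd t) := by
    intro t; show a11 • deriv ξ t + cross3 (ξ t) (deriv ξ t) = _; rw [hderiv]
  have hBc : Continuous B := by
    have h3 : B = fun t => a11 • Xd t + cross3 (ξ t) (Xd t) := funext hBeq
    rw [h3]
    exact (hXdc.const_smul a11).add (continuous_cross3 hξc hXdc)
  have hγ' : ∀ t, HasDerivAt γ ((a02 / (1 + a11 ^ 2)) • (t • B t)) t := by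
    intro t
    have hint : Continuous fun t : ℝ => t • B t := continuous_id.smul hBc
    exact (intervalIntegral.integral_hasDerivAt_right
      (hint.intervalIntegrable 0 t)
      (hint.stronglyMeasurableAtFilter _ _) hint.continuousAt).const_smul (a02 / (1 + a11 ^ 2))
  have hp1 : p1 fc u v = ξ v := by
    have h : HasDerivAt (fun t : ℝ => γ v + t • ξ v) ((1:ℝ) • ξ v) u :=
      ((hasDerivAt_id u).smul_const (ξ v)).const_add (γ v)
    have h2 : p1 fc u v = deriv (fun t : ℝ => γ v + t • ξ v) u := rfl
    rw [h2, h.deriv, one_smul]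
  have hp2 : p2 fc u v = (a02 / (1 + a11 ^ 2)) • (v • B v) + u • Xd v := by
    have h : HasDerivAt (fun t : ℝ => γ t + u • ξ t)
        ((a02 / (1 + a11 ^ 2)) • (v • B v) + u • Xd v) v :=
      (hγ' v).add ((hXd v).const_smul u)
    exact h.deriv
  have hmem : |s v| < π / 2 := by
    rw [hsdef, abs_lt]
    exact ⟨Real.neg_pi_div_two_lt_arctan _, Real.arctan_lt_pi_div_two _⟩
  have hcc1 : dot3 (c (s v)) (c (s v)) = 1 := hc1 _ hmem
  have hcc2 : dot3 (deriv c (s v)) (deriv c (s v)) = 1 := hc2 _ hmem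
  have hcc0 : dot3 (c (s v)) (deriv c (s v)) = 0 := by
    have hO : IsOpen {t : ℝ | |t| < π / 2} := isOpen_lt continuous_abs continuous_const
    have hev : (fun t => dot3 (c t) (c t)) =ᶠ[nhds (s v)] fun _ => (1:ℝ) :=
      Filter.eventuallyEq_of_mem (hO.mem_nhds hmem) hc1
    have h0 : HasDerivAt (fun t => dot3 (c t) (c t)) 0 (s v) :=
      (hasDerivAt_const (s v) (1:ℝ)).congr_of_eventuallyEq hev
    have h2 : HasDerivAt (fun t => dot3 (c t) (c t))
        (dot3 (deriv c (s v)) (c (s v)) + dot3 (c (s v)) (deriv c (s v))) (s v) :=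
      (hcd (s v)).dot3' (hcd (s v))
    have h3 := h0.unique h2
    rw [dot3_comm (deriv c (s v))] at h3
    linarith
  have hAne : r v ≠ 0 := (hrpos v).ne'
  have hXv : ξ v = r v • c (s v) := rfl
  have hXdv : Xd v = ((1 + a11 ^ 2) * v / r v) • c (s v) + (k / r v) • deriv c (s v) := rfl
  have hXX : dot3 (ξ v) (ξ v) = 1 + (1 + a11 ^ 2) * v ^ 2 := by
    rw [hXv, dot3_smul_left, dot3_smul_right, hcc1, ← hr2 v]; ring
  have hXXd : dot3 (ξ v) (Xd v) = (1 + a11 ^ 2) * v := by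
    rw [hXv, hXdv, dot3_add_right, dot3_smul_left, dot3_smul_left, dot3_smul_right,
      dot3_smul_right, hcc1, hcc0]
    field_simp
    ring
  have hXdXd : dot3 (Xd v) (Xd v) = 1 + a11 ^ 2 := by
    rw [hXdv, dot3_add_left, dot3_add_right, dot3_add_right,
      dot3_smul_left, dot3_smul_left, dot3_smul_left, dot3_smul_left,
      dot3_smul_right, dot3_smul_right, dot3_smul_right, dot3_smul_right,
      hcc1, hcc2, hcc0, dot3_comm (deriv c (s v)) (c (s v)), hcc0]
    have h2 := hr2 v
    field_simp
    nlinarith [hk2, hr2 v]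
  have hcl : dot3 (ξ v) (cross3 (ξ v) (Xd v)) = 0 := dot3_cross_left _ _
  have hcr : dot3 (Xd v) (cross3 (ξ v) (Xd v)) = 0 := dot3_cross_right _ _
  have hcl' : dot3 (cross3 (ξ v) (Xd v)) (ξ v) = 0 := by rw [dot3_comm]; exact hcl
  have hcr' : dot3 (cross3 (ξ v) (Xd v)) (Xd v) = 0 := by rw [dot3_comm]; exact hcr
  have hcc' : dot3 (cross3 (ξ v) (Xd v)) (cross3 (ξ v) (Xd v)) =
      (1 + (1 + a11 ^ 2) * v ^ 2) * (1 + a11 ^ 2) - ((1 + a11 ^ 2) * v) ^ 2 := by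
    rw [dot3_cross_cross, hXX, hXXd, hXdXd]
  have hXdX : dot3 (Xd v) (ξ v) = (1 + a11 ^ 2) * v := by rw [dot3_comm]; exact hXXd
  refine ⟨?_, ?_, ?_⟩
  · rw [hp1]; exact hXX
  · rw [hp1, hp2, hBeq v]
    simp only [dot3_add_right, dot3_smul_right, hcl, hXX, hXXd]
    field_simp
    ring
  · rw [hp2, hBeq v]
    simp only [dot3_add_left, dot3_add_right, dot3_smul_left, dot3_smul_right,
      hcl, hcr, hcl', hcr', hcc', hXX, hXXd, hXdX, hXdXd]
    field_simp
    ring
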